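/- Let V be a (d·k)×d complex matrix with VᴴV = 1_d, let p ≥ 1, and let P₀,…,P_{p−1} be d×d orthogonal projections, pairwise orthogonal, summing to the identity, and satisfying V P_a = (P_{a⊕1} ⊗ 1_k) V for every a (⊕ = addition mod p). Let ρˢˢ be a positive definite d×d matrix of trace one commuting with every P_a. Set γ := e^{2πi/p}, Z := Σ_a γ^a P_a, let 𝒯 := { A : (d·k)×d complex matrix with V Vᴴ A = 0 }, put the inner product (A,B) := tr(ρˢˢ Aᴴ B) on 𝒯, and define the linear map U(A) := γ (Zᴴ ⊗ 1_k) A Z. Then: U maps 𝒯 into itself; U preserves the inner product, i.e. (U A, U B) = (A, B) for all A, B ∈ 𝒯; U^p = Id; and 𝒯 decomposes as the orthogonal direct sum ⊕_{m=0}^{p−1} 𝒱_m, where 𝒱_m := { A ∈ 𝒯 : A P_a = (P_{a⊕1−m} ⊗ 1_k) A for every a } and U(A) = γ^m A for every A ∈ 𝒱_m. -/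

import Mathlib

open Matrix Filter
open scoped Kronecker ComplexConjugate ComplexOrder

noncomputable section

namespace QMCPaper

/-- The `j`-th block (Kraus operator style) of a `(d₁·k)×d₂` matrix. -/
def blk {d₁ d₂ k : ℕ} (V : Matrix (Fin d₁ × Fin k) (Fin d₂) ℂ) (j : Fin k) :
    Matrix (Fin d₁) (Fin d₂) ℂ :=
  fun a b => V (a, j) b

/-- The Kraus operators of a QMC isometry. -/
def kraus {d k : ℕ} (V : Matrix (Fin d × Fin k) (Fin d) ℂ) (j : Fin k) :
    Matrix (Fin d) (Fin d) ℂ :=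
  blk V j

/-- The transition channel `T_V(X) = Vᴴ (X ⊗ 1_k) V = Σ_j K_jᴴ X K_j`. -/
def chan {d k : ℕ} (V : Matrix (Fin d × Fin k) (Fin d) ℂ)
    (X : Matrix (Fin d) (Fin d) ℂ) : Matrix (Fin d) (Fin d) ℂ :=
  ∑ j : Fin k, (kraus V j)ᴴ * X * kraus V j

/-- The predual channel `T_{V*}(ρ) = Σ_j K_j ρ K_jᴴ`. -/
def predual {d k : ℕ} (V : Matrix (Fin d × Fin k) (Fin d) ℂ)
    (ρ : Matrix (Fin d) (Fin d) ℂ) : Matrix (Fin d) (Fin d) ℂ :=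
  ∑ j : Fin k, kraus V j * ρ * (kraus V j)ᴴ

/-- A state: positive semidefinite matrix of trace one. -/
def IsState {d : ℕ} (ρ : Matrix (Fin d) (Fin d) ℂ) : Prop :=
  ρ.PosSemidef ∧ ρ.trace = 1

/-- `V` is an isometry defining an irreducible QMC with (unique, faithful) stationary
state `ρss`. -/
def IsIrreducible {d k : ℕ} (V : Matrix (Fin d × Fin k) (Fin d) ℂ)
    (ρss : Matrix (Fin d) (Fin d) ℂ) : Prop :=
  Vᴴ * V = 1 ∧ IsState ρss ∧ predual V ρss = ρss ∧ ρss.PosDef ∧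
    ∀ ρ, IsState ρ → predual V ρ = ρ → ρ = ρss

/-- For a word `i = (i_0, …, i_{n-1})`, the operator `K_i = K_{i_{n-1}} ⋯ K_{i_0}`. -/
def krausWord {d k : ℕ} (V : Matrix (Fin d × Fin k) (Fin d) ℂ) {n : ℕ}
    (i : Fin n → Fin k) : Matrix (Fin d) (Fin d) ℂ :=
  ((List.ofFn i).reverse.map (kraus V)).prod

/-- The output state at time `n` with initial system state `ρ`:
its `(i,j)` entry is `tr(K_i ρ K_jᴴ)`. -/
def outState {d k : ℕ} (V : Matrix (Fin d × Fin k) (Fin d) ℂ)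
    (ρ : Matrix (Fin d) (Fin d) ℂ) (n : ℕ) :
    Matrix (Fin n → Fin k) (Fin n → Fin k) ℂ :=
  fun i j => (krausWord V i * ρ * (krausWord V j)ᴴ).trace

/-- Output equivalence (with given initial states): equality of all output states. -/
def OutputEquiv {d₁ d₂ k : ℕ}
    (V₁ : Matrix (Fin d₁ × Fin k) (Fin d₁) ℂ) (ρ₁ : Matrix (Fin d₁) (Fin d₁) ℂ)
    (V₂ : Matrix (Fin d₂ × Fin k) (Fin d₂) ℂ) (ρ₂ : Matrix (Fin d₂) (Fin d₂) ℂ) : Prop :=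
  ∀ n : ℕ, 1 ≤ n → ∀ i j : Fin n → Fin k,
    (krausWord V₁ i * ρ₁ * (krausWord V₁ j)ᴴ).trace =
      (krausWord V₂ i * ρ₂ * (krausWord V₂ j)ᴴ).trace

/-- A (possibly rectangular) unitary matrix. -/
def IsUnitaryMat {d₁ d₂ : ℕ} (W : Matrix (Fin d₁) (Fin d₂) ℂ) : Prop :=
  Wᴴ * W = 1 ∧ W * Wᴴ = 1

end QMCPaper

namespace QMCPaper

/-- The primitive `p`-th root of unity `γ = e^{2πi/p}`. -/
def rootOfUnityC (p : ℕ) : ℂ := Complex.exp (2 * Real.pi * Complex.I / p)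

/-- The unitary `Z = Σ_a γ^a P_a` built from the periodic projections. -/
def Zmat {d p : ℕ} (P : Fin p → Matrix (Fin d) (Fin d) ℂ) :
    Matrix (Fin d) (Fin d) ℂ :=
  ∑ a : Fin p, rootOfUnityC p ^ (a : ℕ) • P a

/-- The action `U(A) = γ (Zᴴ ⊗ 1_k) A Z` of the stabiliser generator on
`(dk)×d` matrices. -/
def stabAct {d k p : ℕ} (P : Fin p → Matrix (Fin d) (Fin d) ℂ)
    (A : Matrix (Fin d × Fin k) (Fin d) ℂ) : Matrix (Fin d × Fin k) (Fin d) ℂ :=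
  rootOfUnityC p • (((Zmat P)ᴴ ⊗ₖ (1 : Matrix (Fin k) (Fin k) ℂ)) * A * Zmat P)

/-- The eigenspace `𝒱_m ⊆ 𝒯` of the stabiliser action. -/
def eigSpace {d k p : ℕ} [NeZero p] (V : Matrix (Fin d × Fin k) (Fin d) ℂ)
    (P : Fin p → Matrix (Fin d) (Fin d) ℂ) (m : Fin p) :
    Set (Matrix (Fin d × Fin k) (Fin d) ℂ) :=
  {A | V * Vᴴ * A = 0 ∧
    ∀ a, A * P a = (P (a + 1 - m) ⊗ₖ (1 : Matrix (Fin k) (Fin k) ℂ)) * A}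

/-!
With `Z = ∑ γ^a P_a`, the relation `V P_a = (P_{a+1} ⊗ 1) V` and its adjoint make `V Vᴴ` commute
with every `P_a ⊗ 1`, hence with `Zᴴ ⊗ 1`, so `U` preserves `𝒯`. Since `Z` is unitary, commutes
with `ρˢˢ` and satisfies `Z^p = 1`, `U` is an isometry with `U^p = 1`. On `𝒱_m` the identity
`γ · γ^a · conj γ^(a+1-m) = γ^m` gives `U = γ^m`, and eigenvectors of an isometry for distinct
eigenvalues are orthogonal. Finally `A ↦ ∑_a (P_{a+1-m} ⊗ 1) A P_a` maps `𝒯` into `𝒱_m`, is the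
identity on `𝒱_m` and kills `𝒱_{m'}` for `m' ≠ m`, and these maps sum to the identity because
`∑_m P_{a+1-m} = 1`.
-/

section OrthogonalPartition

variable {ι n : Type*} [Fintype ι] [Fintype n] {P : ι → Matrix n n ℂ}

theorem sum_smul_mul_of_orthogonal [DecidableEq ι] (hidem : ∀ a, P a * P a = P a)
    (horth : ∀ a b, a ≠ b → P a * P b = 0) (c : ι → ℂ) (b : ι) :
    (∑ a, c a • P a) * P b = c b • P b := by
  rw [Finset.sum_mul, Finset.sum_eq_single b (fun a _ hab => by
    rw [smul_mul_assoc, horth a b hab, smul_zero]) (by simp), smul_mul_assoc, hidem]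

theorem mul_sum_smul_of_orthogonal [DecidableEq ι] (hidem : ∀ a, P a * P a = P a)
    (horth : ∀ a b, a ≠ b → P a * P b = 0) (c : ι → ℂ) (b : ι) :
    P b * (∑ a, c a • P a) = c b • P b := by
  rw [Finset.mul_sum, Finset.sum_eq_single b (fun a _ hab => by
    rw [mul_smul_comm, horth b a hab.symm, smul_zero]) (by simp), mul_smul_comm, hidem]

omit [Fintype n] in
theorem conjTranspose_sum_smul (hherm : ∀ a, (P a)ᴴ = P a) (c : ι → ℂ) :
    (∑ a, c a • P a)ᴴ = ∑ a, star (c a) • P a := by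
  simp only [conjTranspose_sum, conjTranspose_smul, hherm]

theorem sum_smul_pow [DecidableEq ι] [DecidableEq n] (hidem : ∀ a, P a * P a = P a)
    (horth : ∀ a b, a ≠ b → P a * P b = 0) (hsum : ∑ a, P a = 1) (c : ι → ℂ) (N : ℕ) :
    (∑ a, c a • P a) ^ N = ∑ a, c a ^ N • P a := by
  induction N with
  | zero => simp [hsum]
  | succ N ih =>
    rw [pow_succ, ih, Finset.sum_mul]
    refine Finset.sum_congr rfl fun b _ => ?_
    rw [smul_mul_assoc, mul_sum_smul_of_orthogonal hidem horth, smul_smul, pow_succ]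

theorem sum_smul_mem_unitaryGroup [DecidableEq ι] [DecidableEq n] (hherm : ∀ a, (P a)ᴴ = P a)
    (hidem : ∀ a, P a * P a = P a) (horth : ∀ a b, a ≠ b → P a * P b = 0)
    (hsum : ∑ a, P a = 1) {c : ι → ℂ} (hc : ∀ a, star (c a) * c a = 1) :
    ∑ a, c a • P a ∈ unitaryGroup n ℂ := by
  rw [mem_unitaryGroup_iff, star_eq_conjTranspose, conjTranspose_sum_smul hherm,
    Finset.mul_sum, ← hsum]
  refine Finset.sum_congr rfl fun b _ => ?_
  rw [mul_smul_comm, sum_smul_mul_of_orthogonal hidem horth, smul_smul, hc, one_smul]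

end OrthogonalPartition

section Kronecker

variable {R l m n κ : Type*} [CommSemiring R]

theorem kronecker_one_mul_kronecker_one [Fintype m] [Fintype κ] [DecidableEq κ]
    (X : Matrix l m R) (Y : Matrix m n R) :
    (X ⊗ₖ (1 : Matrix κ κ R)) * (Y ⊗ₖ (1 : Matrix κ κ R)) = (X * Y) ⊗ₖ 1 := by
  rw [← mul_kronecker_mul, one_mul]

theorem kronecker_one_pow [Fintype m] [DecidableEq m] [Fintype κ] [DecidableEq κ]
    (X : Matrix m m R) (N : ℕ) :
    (X ⊗ₖ (1 : Matrix κ κ R)) ^ N = (X ^ N) ⊗ₖ 1 := by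
  induction N with
  | zero => simp
  | succ N ih => rw [pow_succ, ih, kronecker_one_mul_kronecker_one, pow_succ]

theorem sum_kronecker {ι : Type*} (s : Finset ι) (X : ι → Matrix l m R) (Y : Matrix n κ R) :
    (∑ a ∈ s, X a) ⊗ₖ Y = ∑ a ∈ s, X a ⊗ₖ Y := by
  ext
  simp [Matrix.sum_apply, Finset.sum_mul]

end Kronecker

theorem commute_mul_conjTranspose_of_mul_eq {R m n : Type*} [CommRing R] [StarRing R]
    [Fintype m] [Fintype n] {V : Matrix m n R} {X : Matrix n n R} {Y : Matrix m m R}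
    (hX : Xᴴ = X) (hY : Yᴴ = Y) (h : V * X = Y * V) : Commute (V * Vᴴ) Y := by
  have hVY : Vᴴ * Y = X * Vᴴ := by
    simpa only [conjTranspose_mul, hX, hY] using (congrArg conjTranspose h).symm
  calc V * Vᴴ * Y = V * X * Vᴴ := by rw [Matrix.mul_assoc, hVY, ← Matrix.mul_assoc]
    _ = Y * (V * Vᴴ) := by rw [h, Matrix.mul_assoc]

theorem trace_mul_conjTranspose_smul_mul_mul {R l n : Type*} [CommRing R] [StarRing R]
    [Fintype l] [DecidableEq l] [Fintype n] [DecidableEq n] {c : R} {W : Matrix l l R}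
    {Z ρ : Matrix n n R} (hc : star c * c = 1) (hW : Wᴴ * W = 1) (hZ : Z * Zᴴ = 1)
    (hρ : Commute ρ Z) (A B : Matrix l n R) :
    (ρ * (c • (W * A * Z))ᴴ * (c • (W * B * Z))).trace = (ρ * Aᴴ * B).trace := by
  have hWW : Aᴴ * Wᴴ * (W * B) = Aᴴ * B := by
    rw [Matrix.mul_assoc, ← Matrix.mul_assoc Wᴴ, hW, Matrix.one_mul]
  calc (ρ * (c • (W * A * Z))ᴴ * (c • (W * B * Z))).trace
      = (ρ * Zᴴ * (Aᴴ * Wᴴ * (W * B)) * Z).trace := by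
        simp only [conjTranspose_smul, conjTranspose_mul, Matrix.mul_smul, Matrix.smul_mul,
          smul_smul, Matrix.mul_assoc]
        rw [mul_comm, hc, one_smul]
    _ = (Z * ρ * Zᴴ * (Aᴴ * B)).trace := by
        rw [hWW, trace_mul_comm]
        simp only [Matrix.mul_assoc]
    _ = (ρ * Aᴴ * B).trace := by
        rw [← hρ.eq, Matrix.mul_assoc ρ Z, hZ, Matrix.mul_one, Matrix.mul_assoc]

theorem iterate_smul_mul_mul {R m n : Type*} [CommSemiring R] [Fintype m] [DecidableEq m]
    [Fintype n] [DecidableEq n] (c : R) (W : Matrix m m R) (Z : Matrix n n R)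
    (A : Matrix m n R) (N : ℕ) :
    (fun A => c • (W * A * Z))^[N] A = c ^ N • (W ^ N * A * Z ^ N) := by
  induction N with
  | zero => simp
  | succ N ih =>
    rw [Function.iterate_succ_apply', ih, Matrix.mul_smul, Matrix.smul_mul, smul_smul,
      pow_succ' c, pow_succ' W, pow_succ Z]
    simp only [Matrix.mul_assoc]

theorem rootOfUnityC_ne_zero {p : ℕ} : rootOfUnityC p ≠ 0 :=
  Complex.exp_ne_zero _

section RootOfUnity

variable {p : ℕ} [NeZero p]

theorem isPrimitiveRoot_rootOfUnityC : IsPrimitiveRoot (rootOfUnityC p) p :=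
  Complex.isPrimitiveRoot_exp p (NeZero.ne p)

theorem star_rootOfUnityC_pow (N : ℕ) :
    star (rootOfUnityC p ^ N) = (rootOfUnityC p ^ N)⁻¹ := by
  refine (Complex.inv_eq_conj (Complex.norm_eq_one_of_pow_eq_one ?_ (NeZero.ne p))).symm
  rw [← pow_mul, mul_comm, pow_mul, isPrimitiveRoot_rootOfUnityC.pow_eq_one, one_pow]

theorem star_rootOfUnityC_pow_mul_self (N : ℕ) :
    star (rootOfUnityC p ^ N) * rootOfUnityC p ^ N = 1 := by
  rw [star_rootOfUnityC_pow,
    inv_mul_cancel₀ (pow_ne_zero _ rootOfUnityC_ne_zero)]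

theorem rootOfUnityC_pow_val_add (a b : Fin p) :
    rootOfUnityC p ^ ((a + b : Fin p) : ℕ) =
      rootOfUnityC p ^ (a : ℕ) * rootOfUnityC p ^ (b : ℕ) := by
  rw [Fin.val_add, ← pow_eq_pow_mod _ isPrimitiveRoot_rootOfUnityC.pow_eq_one, pow_add]

theorem rootOfUnityC_mul_pow_mul_star_pow (a m : Fin p) :
    rootOfUnityC p * rootOfUnityC p ^ (a : ℕ) *
      star (rootOfUnityC p ^ ((a + 1 - m : Fin p) : ℕ)) = rootOfUnityC p ^ (m : ℕ) := by
  have h : rootOfUnityC p ^ (m : ℕ) * rootOfUnityC p ^ ((a + 1 - m : Fin p) : ℕ) =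
      rootOfUnityC p * rootOfUnityC p ^ (a : ℕ) := by
    rw [← rootOfUnityC_pow_val_add, add_sub_cancel, rootOfUnityC_pow_val_add, Fin.val_one',
      ← pow_eq_pow_mod _ isPrimitiveRoot_rootOfUnityC.pow_eq_one, pow_one, mul_comm]
  rw [star_rootOfUnityC_pow, ← h, mul_inv_cancel_right₀
    (pow_ne_zero _ rootOfUnityC_ne_zero)]

end RootOfUnity

section Stabiliser

variable {d k p : ℕ} [NeZero p] {V : Matrix (Fin d × Fin k) (Fin d) ℂ}
  {P : Fin p → Matrix (Fin d) (Fin d) ℂ}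

theorem zmat_mem_unitaryGroup (hherm : ∀ a, (P a)ᴴ = P a) (hidem : ∀ a, P a * P a = P a)
    (horth : ∀ a b, a ≠ b → P a * P b = 0) (hsum : ∑ a, P a = 1) :
    Zmat P ∈ unitaryGroup (Fin d) ℂ :=
  sum_smul_mem_unitaryGroup hherm hidem horth hsum fun _ => star_rootOfUnityC_pow_mul_self _

theorem zmat_pow_self (hidem : ∀ a, P a * P a = P a) (horth : ∀ a b, a ≠ b → P a * P b = 0)
    (hsum : ∑ a, P a = 1) : Zmat P ^ p = 1 := by
  rw [Zmat, sum_smul_pow hidem horth hsum, ← hsum]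
  refine Finset.sum_congr rfl fun a _ => ?_
  rw [← pow_mul, mul_comm, pow_mul, isPrimitiveRoot_rootOfUnityC.pow_eq_one, one_pow, one_smul]

omit [NeZero p] in
theorem conjTranspose_zmat_kronecker_one_mul (hherm : ∀ a, (P a)ᴴ = P a)
    (hidem : ∀ a, P a * P a = P a) (horth : ∀ a b, a ≠ b → P a * P b = 0) (b : Fin p) :
    ((Zmat P)ᴴ ⊗ₖ (1 : Matrix (Fin k) (Fin k) ℂ)) * (P b ⊗ₖ (1 : Matrix (Fin k) (Fin k) ℂ)) =
      star (rootOfUnityC p ^ (b : ℕ)) • (P b ⊗ₖ (1 : Matrix (Fin k) (Fin k) ℂ)) := by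
  rw [kronecker_one_mul_kronecker_one, Zmat, conjTranspose_sum_smul hherm,
    sum_smul_mul_of_orthogonal hidem horth, smul_kronecker]

theorem commute_mul_conjTranspose_kronecker_one (hherm : ∀ a, (P a)ᴴ = P a)
    (hper : ∀ a, V * P a = (P (a + 1) ⊗ₖ (1 : Matrix (Fin k) (Fin k) ℂ)) * V) (b : Fin p) :
    Commute (V * Vᴴ) (P b ⊗ₖ (1 : Matrix (Fin k) (Fin k) ℂ)) := by
  have h := hper (b - 1)
  rw [sub_add_cancel] at h
  refine commute_mul_conjTranspose_of_mul_eq (hherm (b - 1)) ?_ h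
  rw [conjTranspose_kronecker, hherm, conjTranspose_one]

theorem commute_mul_conjTranspose_zmat_kronecker_one (hherm : ∀ a, (P a)ᴴ = P a)
    (hper : ∀ a, V * P a = (P (a + 1) ⊗ₖ (1 : Matrix (Fin k) (Fin k) ℂ)) * V) :
    Commute (V * Vᴴ) ((Zmat P)ᴴ ⊗ₖ (1 : Matrix (Fin k) (Fin k) ℂ)) := by
  rw [Zmat, conjTranspose_sum_smul hherm, sum_kronecker]
  exact Commute.sum_right _ _ _ fun b _ => by
    rw [smul_kronecker]
    exact (commute_mul_conjTranspose_kronecker_one hherm hper b).smul_right _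

theorem mul_conjTranspose_mul_stabAct (hherm : ∀ a, (P a)ᴴ = P a)
    (hper : ∀ a, V * P a = (P (a + 1) ⊗ₖ (1 : Matrix (Fin k) (Fin k) ℂ)) * V)
    {A : Matrix (Fin d × Fin k) (Fin d) ℂ} (hA : V * Vᴴ * A = 0) :
    V * Vᴴ * stabAct P A = 0 := by
  rw [stabAct, Matrix.mul_smul, ← Matrix.mul_assoc, ← Matrix.mul_assoc,
    (commute_mul_conjTranspose_zmat_kronecker_one hherm hper).eq, Matrix.mul_assoc _ (V * Vᴴ),
    hA, Matrix.mul_zero, Matrix.zero_mul, smul_zero]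

theorem trace_mul_conjTranspose_stabAct_mul_stabAct (hherm : ∀ a, (P a)ᴴ = P a)
    (hidem : ∀ a, P a * P a = P a) (horth : ∀ a b, a ≠ b → P a * P b = 0)
    (hsum : ∑ a, P a = 1) {ρ : Matrix (Fin d) (Fin d) ℂ} (hcomm : ∀ a, Commute ρ (P a))
    (A B : Matrix (Fin d × Fin k) (Fin d) ℂ) :
    (ρ * (stabAct P A)ᴴ * stabAct P B).trace = (ρ * Aᴴ * B).trace := by
  have hZ : Zmat P * (Zmat P)ᴴ = 1 :=
    mem_unitaryGroup_iff.mp (zmat_mem_unitaryGroup hherm hidem horth hsum)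
  refine trace_mul_conjTranspose_smul_mul_mul ?_ ?_ hZ ?_ A B
  · simpa using star_rootOfUnityC_pow_mul_self (p := p) 1
  · rw [conjTranspose_kronecker, conjTranspose_conjTranspose, conjTranspose_one,
      kronecker_one_mul_kronecker_one, hZ, one_kronecker_one]
  · exact Commute.sum_right _ _ _ fun a _ => (hcomm a).smul_right _

theorem stabAct_iterate_self (hidem : ∀ a, P a * P a = P a)
    (horth : ∀ a b, a ≠ b → P a * P b = 0) (hsum : ∑ a, P a = 1)
    (A : Matrix (Fin d × Fin k) (Fin d) ℂ) : (stabAct P)^[p] A = A := by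
  change (fun A => rootOfUnityC p • (((Zmat P)ᴴ ⊗ₖ (1 : Matrix (Fin k) (Fin k) ℂ)) * A *
    Zmat P))^[p] A = A
  rw [iterate_smul_mul_mul, isPrimitiveRoot_rootOfUnityC.pow_eq_one, kronecker_one_pow,
    ← conjTranspose_pow, zmat_pow_self hidem horth hsum, conjTranspose_one, one_kronecker_one,
    Matrix.one_mul, Matrix.mul_one, one_smul]

theorem stabAct_eq_smul_of_mem_eigSpace (hherm : ∀ a, (P a)ᴴ = P a)
    (hidem : ∀ a, P a * P a = P a) (horth : ∀ a b, a ≠ b → P a * P b = 0)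
    (hsum : ∑ a, P a = 1) {m : Fin p} {A : Matrix (Fin d × Fin k) (Fin d) ℂ}
    (hA : A ∈ eigSpace V P m) : stabAct P A = rootOfUnityC p ^ (m : ℕ) • A := by
  have hAZ : A * Zmat P = ∑ a : Fin p, rootOfUnityC p ^ (a : ℕ) • (A * P a) := by
    simp only [Zmat, Matrix.mul_sum, Matrix.mul_smul]
  have hterm : ∀ a : Fin p, rootOfUnityC p • (((Zmat P)ᴴ ⊗ₖ (1 : Matrix (Fin k) (Fin k) ℂ)) *
      (rootOfUnityC p ^ (a : ℕ) • (A * P a))) = rootOfUnityC p ^ (m : ℕ) • (A * P a) := by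
    intro a
    rw [Matrix.mul_smul, hA.2 a, ← Matrix.mul_assoc,
      conjTranspose_zmat_kronecker_one_mul hherm hidem horth, Matrix.smul_mul, smul_smul,
      smul_smul, rootOfUnityC_mul_pow_mul_star_pow]
  rw [stabAct, Matrix.mul_assoc, hAZ, Matrix.mul_sum, Finset.smul_sum,
    Finset.sum_congr rfl fun a _ => hterm a, ← Finset.smul_sum, ← Matrix.mul_sum, hsum,
    Matrix.mul_one]

theorem trace_mul_conjTranspose_mul_eq_zero_of_mem_eigSpace (hherm : ∀ a, (P a)ᴴ = P a)
    (hidem : ∀ a, P a * P a = P a) (horth : ∀ a b, a ≠ b → P a * P b = 0)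
    (hsum : ∑ a, P a = 1) {ρ : Matrix (Fin d) (Fin d) ℂ} (hcomm : ∀ a, Commute ρ (P a))
    {m m' : Fin p} (hmm' : m ≠ m') {A B : Matrix (Fin d × Fin k) (Fin d) ℂ}
    (hA : A ∈ eigSpace V P m) (hB : B ∈ eigSpace V P m') : (ρ * Aᴴ * B).trace = 0 := by
  have h := trace_mul_conjTranspose_stabAct_mul_stabAct hherm hidem horth hsum hcomm A B
  rw [stabAct_eq_smul_of_mem_eigSpace hherm hidem horth hsum hA,
    stabAct_eq_smul_of_mem_eigSpace hherm hidem horth hsum hB] at h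
  simp only [conjTranspose_smul, Matrix.mul_smul, Matrix.smul_mul, trace_smul, smul_smul,
    smul_eq_mul] at h
  refine (mul_left_eq_self₀.mp h).resolve_left fun hγ => hmm' ?_
  rw [star_rootOfUnityC_pow, mul_inv_eq_one₀ (pow_ne_zero _ rootOfUnityC_ne_zero)] at hγ
  exact Fin.val_injective (isPrimitiveRoot_rootOfUnityC.pow_inj m.isLt m'.isLt hγ.symm)

def eigComponent (P : Fin p → Matrix (Fin d) (Fin d) ℂ) (m : Fin p)
    (A : Matrix (Fin d × Fin k) (Fin d) ℂ) : Matrix (Fin d × Fin k) (Fin d) ℂ :=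
  ∑ a, (P (a + 1 - m) ⊗ₖ (1 : Matrix (Fin k) (Fin k) ℂ)) * A * P a

theorem eigComponent_sum {ι : Type*} [Fintype ι] (m : Fin p)
    (A : ι → Matrix (Fin d × Fin k) (Fin d) ℂ) :
    eigComponent P m (∑ i, A i) = ∑ i, eigComponent P m (A i) := by
  simp only [eigComponent, Matrix.mul_sum, Matrix.sum_mul]
  exact Finset.sum_comm

theorem sum_eigComponent (hsum : ∑ a, P a = 1) (A : Matrix (Fin d × Fin k) (Fin d) ℂ) :
    ∑ m, eigComponent P m A = A := by
  have hshift : ∀ a : Fin p, ∑ m, P (a + 1 - m) = 1 := fun a =>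
    (Equiv.sum_comp (Equiv.subLeft (a + 1)) P).trans hsum
  simp only [eigComponent]
  rw [Finset.sum_comm]
  simp only [← Matrix.sum_mul, ← sum_kronecker, hshift, one_kronecker_one, Matrix.one_mul,
    ← Matrix.mul_sum, hsum, Matrix.mul_one]

theorem eigComponent_mem_eigSpace (hherm : ∀ a, (P a)ᴴ = P a)
    (hidem : ∀ a, P a * P a = P a) (horth : ∀ a b, a ≠ b → P a * P b = 0)
    (hper : ∀ a, V * P a = (P (a + 1) ⊗ₖ (1 : Matrix (Fin k) (Fin k) ℂ)) * V) (m : Fin p)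
    {A : Matrix (Fin d × Fin k) (Fin d) ℂ} (hA : V * Vᴴ * A = 0) :
    eigComponent P m A ∈ eigSpace V P m := by
  refine ⟨?_, fun c => ?_⟩
  · rw [eigComponent, Matrix.mul_sum]
    refine Finset.sum_eq_zero fun a _ => ?_
    rw [← Matrix.mul_assoc, ← Matrix.mul_assoc,
      (commute_mul_conjTranspose_kronecker_one hherm hper _).eq, Matrix.mul_assoc _ (V * Vᴴ),
      hA, Matrix.mul_zero, Matrix.zero_mul]
  have hright : eigComponent P m A * P c =
      (P (c + 1 - m) ⊗ₖ (1 : Matrix (Fin k) (Fin k) ℂ)) * A * P c := by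
    rw [eigComponent, Matrix.sum_mul, Finset.sum_eq_single c (fun a _ hac => by
      rw [Matrix.mul_assoc, horth a c hac, Matrix.mul_zero]) (by simp), Matrix.mul_assoc _ (P c),
      hidem]
  have hleft : (P (c + 1 - m) ⊗ₖ (1 : Matrix (Fin k) (Fin k) ℂ)) * eigComponent P m A =
      (P (c + 1 - m) ⊗ₖ (1 : Matrix (Fin k) (Fin k) ℂ)) * A * P c := by
    rw [eigComponent, Matrix.mul_sum, Finset.sum_eq_single c (fun a _ hac => ?_) (by simp)]
    · rw [← Matrix.mul_assoc, ← Matrix.mul_assoc, kronecker_one_mul_kronecker_one, hidem]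
    · rw [← Matrix.mul_assoc, ← Matrix.mul_assoc, kronecker_one_mul_kronecker_one,
        horth _ _ (by simpa using hac.symm), zero_kronecker, Matrix.zero_mul, Matrix.zero_mul]
  rw [hright, hleft]

theorem eigComponent_of_mem_eigSpace (hidem : ∀ a, P a * P a = P a)
    (horth : ∀ a b, a ≠ b → P a * P b = 0) (hsum : ∑ a, P a = 1) {m' : Fin p}
    {B : Matrix (Fin d × Fin k) (Fin d) ℂ} (hB : B ∈ eigSpace V P m') (m : Fin p) :
    eigComponent P m B = if m' = m then B else 0 := by
  have hterm : ∀ a, (P (a + 1 - m) ⊗ₖ (1 : Matrix (Fin k) (Fin k) ℂ)) * B * P a =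
      ((P (a + 1 - m) * P (a + 1 - m')) ⊗ₖ (1 : Matrix (Fin k) (Fin k) ℂ)) * B := fun a => by
    rw [Matrix.mul_assoc, hB.2 a, ← Matrix.mul_assoc, kronecker_one_mul_kronecker_one]
  simp only [eigComponent, hterm]
  split_ifs with h
  · subst h
    simp only [hidem, ← hB.2]
    rw [← Matrix.mul_sum, hsum, Matrix.mul_one]
  · refine Finset.sum_eq_zero fun a _ => ?_
    rw [horth _ _ (by simpa using Ne.symm h), zero_kronecker, Matrix.zero_mul]

theorem existsUnique_eq_sum_mem_eigSpace (hherm : ∀ a, (P a)ᴴ = P a)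
    (hidem : ∀ a, P a * P a = P a) (horth : ∀ a b, a ≠ b → P a * P b = 0)
    (hsum : ∑ a, P a = 1)
    (hper : ∀ a, V * P a = (P (a + 1) ⊗ₖ (1 : Matrix (Fin k) (Fin k) ℂ)) * V)
    {A : Matrix (Fin d × Fin k) (Fin d) ℂ} (hA : V * Vᴴ * A = 0) :
    ∃! f : Fin p → Matrix (Fin d × Fin k) (Fin d) ℂ,
      (∀ m, f m ∈ eigSpace V P m) ∧ A = ∑ m, f m := by
  refine ⟨fun m => eigComponent P m A,
    ⟨fun m => eigComponent_mem_eigSpace hherm hidem horth hper m hA,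
      (sum_eigComponent hsum A).symm⟩,
    ?_⟩
  rintro f ⟨hf, rfl⟩
  funext m
  simp [eigComponent_sum, eigComponent_of_mem_eigSpace hidem horth hsum (hf _)]

end Stabiliser

theorem stabiliser_action_decomposition_general {d k p : ℕ} [NeZero p]
    (V : Matrix (Fin d × Fin k) (Fin d) ℂ)
    (P : Fin p → Matrix (Fin d) (Fin d) ℂ)
    (hherm : ∀ a, (P a)ᴴ = P a)
    (hidem : ∀ a, P a * P a = P a)
    (horth : ∀ a b, a ≠ b → P a * P b = 0)
    (hsum : ∑ a, P a = 1)
    (hper : ∀ a, V * P a = (P (a + 1) ⊗ₖ (1 : Matrix (Fin k) (Fin k) ℂ)) * V)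
    (ρss : Matrix (Fin d) (Fin d) ℂ)
    (hcomm : ∀ a, ρss * P a = P a * ρss) :
    -- `U` maps `𝒯` into itself
    (∀ A : Matrix (Fin d × Fin k) (Fin d) ℂ, V * Vᴴ * A = 0 →
      V * Vᴴ * stabAct P A = 0) ∧
    -- `U` preserves the inner product `(A,B) = tr(ρˢˢ Aᴴ B)` on `𝒯`
    (∀ A B : Matrix (Fin d × Fin k) (Fin d) ℂ, V * Vᴴ * A = 0 → V * Vᴴ * B = 0 →
      (ρss * (stabAct P A)ᴴ * stabAct P B).trace = (ρss * Aᴴ * B).trace) ∧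
    -- `U^p = Id` on `𝒯`
    (∀ A : Matrix (Fin d × Fin k) (Fin d) ℂ, V * Vᴴ * A = 0 →
      (stabAct P)^[p] A = A) ∧
    -- each `𝒱_m` is contained in `𝒯` and consists of eigenvectors of `U` with
    -- eigenvalue `γ^m`
    (∀ (m : Fin p) (A : Matrix (Fin d × Fin k) (Fin d) ℂ), A ∈ eigSpace V P m →
      V * Vᴴ * A = 0 ∧ stabAct P A = rootOfUnityC p ^ (m : ℕ) • A) ∧
    -- the `𝒱_m` are mutually orthogonal
    (∀ m m' : Fin p, m ≠ m' →
      ∀ A B : Matrix (Fin d × Fin k) (Fin d) ℂ,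
        A ∈ eigSpace V P m → B ∈ eigSpace V P m' → (ρss * Aᴴ * B).trace = 0) ∧
    -- `𝒯` is the (direct) sum of the `𝒱_m`
    (∀ A : Matrix (Fin d × Fin k) (Fin d) ℂ, V * Vᴴ * A = 0 →
      ∃! f : Fin p → Matrix (Fin d × Fin k) (Fin d) ℂ,
        (∀ m, f m ∈ eigSpace V P m) ∧ A = ∑ m, f m) :=
  ⟨fun _ => mul_conjTranspose_mul_stabAct hherm hper,
    fun A B _ _ => trace_mul_conjTranspose_stabAct_mul_stabAct hherm hidem horth hsum hcomm A B,
    fun A _ => stabAct_iterate_self hidem horth hsum A,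
    fun _ _ hA => ⟨hA.1, stabAct_eq_smul_of_mem_eigSpace hherm hidem horth hsum hA⟩,
    fun _ _ hmm' _ _ hA hB =>
      trace_mul_conjTranspose_mul_eq_zero_of_mem_eigSpace hherm hidem horth hsum hcomm hmm' hA hB,
    fun _ hA => existsUnique_eq_sum_mem_eigSpace hherm hidem horth hsum hper hA⟩

/-- the unitary action of the stabiliser generator on the identifiable
tangent space `𝒯 = {A : V Vᴴ A = 0}` and its eigenspace decomposition. -/
theorem stabiliser_action_decomposition {d k p : ℕ} [NeZero p]
    (V : Matrix (Fin d × Fin k) (Fin d) ℂ) (hV : Vᴴ * V = 1)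
    (P : Fin p → Matrix (Fin d) (Fin d) ℂ)
    (hherm : ∀ a, (P a)ᴴ = P a)
    (hidem : ∀ a, P a * P a = P a)
    (horth : ∀ a b, a ≠ b → P a * P b = 0)
    (hsum : ∑ a, P a = 1)
    (hper : ∀ a, V * P a = (P (a + 1) ⊗ₖ (1 : Matrix (Fin k) (Fin k) ℂ)) * V)
    (ρss : Matrix (Fin d) (Fin d) ℂ) (hpd : ρss.PosDef) (htr : ρss.trace = 1)
    (hcomm : ∀ a, ρss * P a = P a * ρss) :
    -- `U` maps `𝒯` into itself
    (∀ A : Matrix (Fin d × Fin k) (Fin d) ℂ, V * Vᴴ * A = 0 →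
      V * Vᴴ * stabAct P A = 0) ∧
    -- `U` preserves the inner product `(A,B) = tr(ρˢˢ Aᴴ B)` on `𝒯`
    (∀ A B : Matrix (Fin d × Fin k) (Fin d) ℂ, V * Vᴴ * A = 0 → V * Vᴴ * B = 0 →
      (ρss * (stabAct P A)ᴴ * stabAct P B).trace = (ρss * Aᴴ * B).trace) ∧
    -- `U^p = Id` on `𝒯`
    (∀ A : Matrix (Fin d × Fin k) (Fin d) ℂ, V * Vᴴ * A = 0 →
      (stabAct P)^[p] A = A) ∧
    -- each `𝒱_m` is contained in `𝒯` and consists of eigenvectors of `U` with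
    -- eigenvalue `γ^m`
    (∀ (m : Fin p) (A : Matrix (Fin d × Fin k) (Fin d) ℂ), A ∈ eigSpace V P m →
      V * Vᴴ * A = 0 ∧ stabAct P A = rootOfUnityC p ^ (m : ℕ) • A) ∧
    -- the `𝒱_m` are mutually orthogonal
    (∀ m m' : Fin p, m ≠ m' →
      ∀ A B : Matrix (Fin d × Fin k) (Fin d) ℂ,
        A ∈ eigSpace V P m → B ∈ eigSpace V P m' → (ρss * Aᴴ * B).trace = 0) ∧
    -- `𝒯` is the (direct) sum of the `𝒱_m`
    (∀ A : Matrix (Fin d × Fin k) (Fin d) ℂ, V * Vᴴ * A = 0 →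
      ∃! f : Fin p → Matrix (Fin d × Fin k) (Fin d) ℂ,
        (∀ m, f m ∈ eigSpace V P m) ∧ A = ∑ m, f m) :=
  stabiliser_action_decomposition_general V P hherm hidem horth hsum hper ρss hcomm

end QMCPaper
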